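/- Let m ≥ 4 and n_+ ≥ 0 be integers, let k_1, ..., k_m and ℓ_1, ..., ℓ_{n_+} be positive integers, let n_0 be an integer with ∑_{i=1}^m 2k_i + ∑_{j=1}^{n_+}(2ℓ_j - 1) = n_0 - 4, and set n = n_0 + n_+. Then the real number c = 1 - (m+n)/2 + ∑_{i=1}^m 1/(2k_i + 2) + n_0 + ∑_{j=1}^{n_+} 1/(2ℓ_j + 1) satisfies c ≥ (6+m)/2 ≥ 5 > π²/2. -/
import Mathlib


/-- The Eskin–Kontsevich–Zorich area Siegel–Veech constant (times `π²`) of a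
Teichmüller curve in a hyperelliptic locus satisfies `c ≥ (6+m)/2 ≥ 5 > π²/2`
whenever `m ≥ 4`. Here `n = n_0 + n_+`. -/
theorem stmt_10 (m np : ℕ) (hm : 4 ≤ m) (n0 : ℤ) (k : Fin m → ℤ) (l : Fin np → ℤ)
    (hk : ∀ i, 0 < k i) (hl : ∀ j, 0 < l j)
    (h : (∑ i, 2 * k i) + (∑ j, (2 * l j - 1)) = n0 - 4) :
    ((6 + (m : ℝ)) / 2 ≤
        1 - ((m : ℝ) + ((n0 : ℝ) + (np : ℝ))) / 2 + (∑ i, 1 / (2 * (k i : ℝ) + 2))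
          + (n0 : ℝ) + ∑ j, 1 / (2 * (l j : ℝ) + 1)) ∧
      (5 : ℝ) ≤ (6 + (m : ℝ)) / 2 ∧ Real.pi ^ 2 / 2 < 5 := by
  have hk1 : (2 * (m : ℤ)) ≤ ∑ i, 2 * k i := by
    calc (2 * (m : ℤ)) = ∑ _i : Fin m, 2 := by simp [mul_comm]
    _ ≤ ∑ i, 2 * k i := Finset.sum_le_sum fun i _ => by have := hk i; omega
  have hl1 : ((np : ℤ)) ≤ ∑ j, (2 * l j - 1) := by
    calc ((np : ℤ)) = ∑ _j : Fin np, 1 := by simp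
    _ ≤ ∑ j, (2 * l j - 1) := Finset.sum_le_sum fun j _ => by have := hl j; omega
  have hn0 : (4 : ℤ) + 2 * m + np ≤ n0 := by omega
  have hn0R : (4 : ℝ) + 2 * m + np ≤ (n0 : ℝ) := by exact_mod_cast hn0
  have hS1 : (0 : ℝ) ≤ ∑ i, 1 / (2 * (k i : ℝ) + 2) :=
    Finset.sum_nonneg fun i _ => by
      have : (0 : ℝ) < (k i : ℝ) := by exact_mod_cast hk i
      positivity
  have hS2 : (0 : ℝ) ≤ ∑ j, 1 / (2 * (l j : ℝ) + 1) :=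
    Finset.sum_nonneg fun j _ => by
      have : (0 : ℝ) < (l j : ℝ) := by exact_mod_cast hl j
      positivity
  have hmR : (4 : ℝ) ≤ (m : ℝ) := by exact_mod_cast hm
  refine ⟨by linarith, by linarith, ?_⟩
  have hpi : Real.pi < 3.15 := Real.pi_lt_d2
  nlinarith [Real.pi_pos]
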